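/- arXiv:2108.12916 — 5 statements merged into one kernel-verified Lean document; each statement's English description precedes it below -/
import Mathlib

section
/- Let m be a positive natural number and let Ω be a nonempty closed convex subset of the Euclidean space ℝ^m. The function f(x) := (1/2)·dist²(x, Ω), where dist(x, Ω) denotes the Euclidean distance from x to Ω, is strongly convex on ℝ^m (i.e., there exists c > 0 such that f(u) ≥ f(v) + ⟪∇f(v), u − v⟫ + (c/2)‖u − v‖² for all u, v, equivalently f is c-strongly convex in the sense of StrongConvexOn) if and only if Ω is a singleton. -/
open scoped RealInnerProductSpace

private lemma norm_combo_sq {E : Type*} [NormedAddCommGroup E] [InnerProductSpace ℝ E]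
    (u v : E) {a b : ℝ} (ha : 0 ≤ a) (hb : 0 ≤ b) (hab : a + b = 1) :
    ‖a • u + b • v‖ ^ 2 = a * ‖u‖ ^ 2 + b * ‖v‖ ^ 2 - a * b * ‖u - v‖ ^ 2 := by
  rw [norm_add_sq_real, norm_sub_sq_real, norm_smul, norm_smul, real_inner_smul_left,
    inner_smul_right, Real.norm_of_nonneg ha, Real.norm_of_nonneg hb, mul_pow, mul_pow]
  obtain rfl := eq_sub_of_add_eq hab
  ring_nf

/-- For a nonempty closed convex subset `Ω` of `ℝ^m` (`m > 0`), the function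
`f x = (1/2) · dist²(x, Ω)` is strongly convex (for some modulus `c > 0`)
if and only if `Ω` is a singleton. -/
theorem stmt_0 (m : ℕ) (hm : 0 < m)
    (Ω : Set (EuclideanSpace ℝ (Fin m)))
    (hne : Ω.Nonempty) (hcl : IsClosed Ω) (hconv : Convex ℝ Ω) :
    (∃ c : ℝ, 0 < c ∧
      StrongConvexOn Set.univ c
        (fun x : EuclideanSpace ℝ (Fin m) => (1 / 2) * (Metric.infDist x Ω) ^ 2)) ↔
    ∃ ω : EuclideanSpace ℝ (Fin m), Ω = {ω} := by
  constructor
  · rintro ⟨c, hc, hconvex, hineq⟩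
    obtain ⟨ω, hω⟩ := hne
    refine ⟨ω, Set.eq_singleton_iff_unique_mem.2 ⟨hω, fun ω' hω' => ?_⟩⟩
    have h := hineq (Set.mem_univ ω') (Set.mem_univ ω)
      (a := 1/2) (b := 1/2) (by norm_num) (by norm_num) (by norm_num)
    have hmid : (1/2 : ℝ) • ω' + (1/2 : ℝ) • ω ∈ Ω :=
      hconv hω' hω (by norm_num) (by norm_num) (by norm_num)
    have e1 : Metric.infDist ω' Ω = 0 := Metric.infDist_zero_of_mem hω'
    have e2 : Metric.infDist ω Ω = 0 := Metric.infDist_zero_of_mem hω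
    have e3 : Metric.infDist ((1/2 : ℝ) • ω' + (1/2 : ℝ) • ω) Ω = 0 :=
      Metric.infDist_zero_of_mem hmid
    simp only [e1, e2, e3, smul_eq_mul] at h
    have : ‖ω' - ω‖ ^ 2 ≤ 0 := by nlinarith
    have : ‖ω' - ω‖ = 0 := by nlinarith [sq_nonneg ‖ω' - ω‖, norm_nonneg (ω' - ω)]
    exact sub_eq_zero.mp (norm_eq_zero.mp this)
  · rintro ⟨ω, rfl⟩
    refine ⟨1, one_pos, convex_univ, fun x _ y _ a b ha hb hab => ?_⟩
    have hdx : ∀ z : EuclideanSpace ℝ (Fin m), Metric.infDist z {ω} = ‖z - ω‖ := fun z => by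
      rw [Metric.infDist_singleton, dist_eq_norm]
    simp only [hdx, smul_eq_mul]
    have hcomb : a • x + b • y - ω = a • (x - ω) + b • (y - ω) := by
      rw [show a • (x - ω) + b • (y - ω) = a • x + b • y - (a + b) • ω from by module,
        hab, one_smul]
    rw [hcomb, norm_combo_sq _ _ ha hb hab]
    have hxy : x - ω - (y - ω) = x - y := by abel
    rw [hxy]
    ring_nf
    nlinarith [sq_nonneg ‖x - y‖, mul_nonneg ha hb]
end

section
/- (Geometric core of the per-step progress lemma for non-drop steps.) Let E be a real Hilbert space, Ω ⊆ E a nonempty closed convex set, A ⊆ E a nonempty affine subspace, and Q > 0. Let x ∈ A with ‖x‖ ≤ Q, set ω := proj_Ω(x), and let y ∈ A be the point minimizing ‖c − ω‖ over c ∈ A. Then for every q ∈ A with ‖q‖ ≤ Q satisfying (1/2)·dist²(x, Ω) ≥ (1/2)·dist²(q, Ω), one has (1/2)·dist²(x, Ω) − (1/2)·dist²(y, Ω) ≥ ((1/2)·dist²(x, Ω) − (1/2)·dist²(q, Ω))² / (8Q²). -/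
open RealInnerProductSpace

private lemma le_infDist_aux {E : Type*} [MetricSpace E] {s : Set E} {x : E} {r : ℝ}
    (hs : s.Nonempty) (h : ∀ y ∈ s, r ≤ dist x y) : r ≤ Metric.infDist x s := by
  by_contra hlt
  push_neg at hlt
  obtain ⟨y, hy, hd⟩ := (Metric.infDist_lt_iff hs).mp hlt
  exact absurd (h y hy) (not_le.mpr hd)

/-- Geometric core of the per-step progress lemma for non-drop steps: with
`ω = proj_Ω x` and `y` the affine minimizer of `A` with respect to `ω`, for any
`q ∈ A` with `‖q‖ ≤ Q` whose half squared distance to `Ω` is at most that of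
`x`, the decrease from `x` to `y` is at least
`((1/2)dist²(x,Ω) − (1/2)dist²(q,Ω))² / (8Q²)`. -/
theorem stmt_7 {E : Type*} [NormedAddCommGroup E] [InnerProductSpace ℝ E] [CompleteSpace E]
    (Ω : Set E) (hne : Ω.Nonempty) (hcl : IsClosed Ω) (hconv : Convex ℝ Ω)
    (A : AffineSubspace ℝ E) (hA : (A : Set E).Nonempty) (hAc : IsClosed (A : Set E))
    (Q : ℝ) (hQ : 0 < Q)
    (x : E) (hx : x ∈ A) (hxQ : ‖x‖ ≤ Q)
    (ω : E) (hω : ω ∈ Ω) (hproj : ∀ z ∈ Ω, dist x ω ≤ dist x z)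
    (y : E) (hy : y ∈ A) (hymin : ∀ c ∈ A, ‖y - ω‖ ≤ ‖c - ω‖) :
    ∀ q ∈ A, ‖q‖ ≤ Q →
      (1 / 2) * (Metric.infDist q Ω) ^ 2 ≤ (1 / 2) * (Metric.infDist x Ω) ^ 2 →
      ((1 / 2) * (Metric.infDist x Ω) ^ 2 - (1 / 2) * (Metric.infDist q Ω) ^ 2) ^ 2
          / (8 * Q ^ 2) ≤
        (1 / 2) * (Metric.infDist x Ω) ^ 2 - (1 / 2) * (Metric.infDist y Ω) ^ 2 := by
  intro q hq hqQ hfq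
  -- infDist x Ω = ‖x - ω‖
  have hdx : Metric.infDist x Ω = ‖x - ω‖ := by
    apply le_antisymm
    · simpa [dist_eq_norm] using Metric.infDist_le_dist_of_mem hω
    · exact le_infDist_aux hne (fun z hz => by simpa [dist_eq_norm] using hproj z hz)
  -- ω is the projection: obtuse angle property
  haveI := hne.to_subtype
  have hinf : ‖x - ω‖ = ⨅ w : Ω, ‖x - w‖ := by
    apply le_antisymm
    · exact le_ciInf fun w => by simpa [dist_eq_norm] using hproj w w.2
    · have := ciInf_le (f := fun w : Ω => ‖x - (w : E)‖)
        (show BddBelow _ from ⟨0, by rintro r ⟨w, rfl⟩; positivity⟩) (⟨ω, hω⟩ : Ω)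
      simpa using this
  have hperp : ∀ w ∈ Ω, ⟪x - ω, w - ω⟫ ≤ 0 :=
    (norm_eq_iInf_iff_real_inner_le_zero hconv hω).mp hinf
  set g : ℝ := ⟪x - ω, q - x⟫ with hg
  -- key gradient inequality
  have hkey0 : ∀ p ∈ Ω, ‖x - ω‖ ^ 2 + 2 * g ≤ dist q p ^ 2 := by
    intro p hp
    rw [dist_eq_norm]
    have hsplit : q - p = (q - x) + (x - ω) + (ω - p) := by abel
    have hcs : ⟪x - ω, q - p⟫ ≤ ‖x - ω‖ * ‖q - p‖ := real_inner_le_norm _ _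
    have hexp : ⟪x - ω, q - p⟫ = g + ‖x - ω‖ ^ 2 - ⟪x - ω, p - ω⟫ := by
      rw [hsplit, inner_add_right, inner_add_right, real_inner_self_eq_norm_sq]
      have : ⟪x - ω, ω - p⟫ = - ⟪x - ω, p - ω⟫ := by
        rw [← inner_neg_right]; congr 1; abel
      rw [this, hg]; ring
    have hp0 := hperp p hp
    nlinarith [sq_nonneg (‖q - p‖ - ‖x - ω‖)]
  have hkey : ‖x - ω‖ ^ 2 + 2 * g ≤ (Metric.infDist q Ω) ^ 2 := by
    rcases le_or_gt (‖x - ω‖ ^ 2 + 2 * g) 0 with h | h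
    · exact h.trans (by positivity)
    · have hsq : Real.sqrt (‖x - ω‖ ^ 2 + 2 * g) ≤ Metric.infDist q Ω := by
        apply le_infDist_aux hne
        intro p hp
        have := hkey0 p hp
        have hd : (0:ℝ) ≤ dist q p := dist_nonneg
        calc Real.sqrt (‖x - ω‖ ^ 2 + 2 * g) ≤ Real.sqrt (dist q p ^ 2) :=
              Real.sqrt_le_sqrt this
          _ = dist q p := by rw [Real.sqrt_sq hd]
      calc ‖x - ω‖ ^ 2 + 2 * g
          = Real.sqrt (‖x - ω‖ ^ 2 + 2 * g) ^ 2 := (Real.sq_sqrt h.le).symm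
        _ ≤ (Metric.infDist q Ω) ^ 2 := by
            have h0 : (0:ℝ) ≤ Real.sqrt (‖x - ω‖ ^ 2 + 2 * g) := Real.sqrt_nonneg _
            nlinarith [Metric.infDist_nonneg (x := q) (s := Ω)]
  -- setup
  set dx : ℝ := ‖x - ω‖ with hdxdef
  set dq : ℝ := Metric.infDist q Ω with hdq
  set dy : ℝ := Metric.infDist y Ω with hdy
  set D : ℝ := (1/2) * dx ^ 2 - (1/2) * dq ^ 2 with hD
  have hD0 : 0 ≤ D := by rw [hD]; rw [hdx] at hfq; linarith
  set t : ℝ := D / (4 * Q ^ 2) with ht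
  have hQ2 : (0:ℝ) < Q ^ 2 := by positivity
  have ht0 : 0 ≤ t := by positivity
  have htD : t * (4 * Q ^ 2) = D := div_mul_cancel₀ _ (by positivity)
  -- the trial point
  set z : E := t • (q - x) + x with hz
  have hzA : z ∈ A := by
    have := AffineSubspace.smul_vsub_vadd_mem A t hq hx hx
    simpa [vsub_eq_sub, vadd_eq_add] using this
  have hyz : dy ≤ ‖z - ω‖ := by
    calc dy ≤ dist y ω := Metric.infDist_le_dist_of_mem hω
      _ = ‖y - ω‖ := dist_eq_norm _ _
      _ ≤ ‖z - ω‖ := hymin z hzA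
  have hdy0 : 0 ≤ dy := Metric.infDist_nonneg
  have hzexp : ‖z - ω‖ ^ 2 = dx ^ 2 + 2 * t * g + t ^ 2 * ‖q - x‖ ^ 2 := by
    have h1 : z - ω = (x - ω) + t • (q - x) := by rw [hz]; abel
    rw [h1, norm_add_sq_real, real_inner_smul_right, norm_smul, hdxdef]
    rw [Real.norm_eq_abs]
    rw [mul_pow, sq_abs]
    ring
  have hM : ‖q - x‖ ^ 2 ≤ 4 * Q ^ 2 := by
    have h1 : ‖q - x‖ ≤ 2 * Q := le_trans (norm_sub_le q x) (by linarith)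
    nlinarith [norm_nonneg (q - x)]
  have hdy2 : dy ^ 2 ≤ dx ^ 2 + 2 * t * g + t ^ 2 * ‖q - x‖ ^ 2 := by
    rw [← hzexp]; nlinarith [norm_nonneg (z - ω)]
  have hgD : g ≤ -D := by rw [hD]; linarith [hkey]
  -- final computation
  clear_value g dx dq dy D t z
  rw [hdx, ← hD]
  rw [div_le_iff₀ (by positivity : (0:ℝ) < 8 * Q ^ 2)]
  have htg : t * g ≤ t * (-D) := mul_le_mul_of_nonneg_left hgD ht0
  have htM : t ^ 2 * ‖q - x‖ ^ 2 ≤ t ^ 2 * (4 * Q ^ 2) :=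
    mul_le_mul_of_nonneg_left hM (by positivity)
  calc D ^ 2 = (2 * t * D - t ^ 2 * (4 * Q ^ 2)) / 2 * (8 * Q ^ 2) := by
        rw [← htD]; ring
    _ ≤ (dx ^ 2 - dy ^ 2) / 2 * (8 * Q ^ 2) :=
        mul_le_mul_of_nonneg_right (by linarith) (by positivity)
    _ = (1 / 2 * dx ^ 2 - 1 / 2 * dy ^ 2) * (8 * Q ^ 2) := by ring
end

section
/- (Wolfe's criterion gives strict improvement.) Let E be a real Hilbert space, ω ∈ E, let S ⊆ E be a finite nonempty set, let x lie in the affine span of S, and let s ∈ E satisfy ⟪x − ω, x − s⟫ > 0. Let y be the point of the affine span of S ∪ {s} minimizing ‖c − ω‖. Then y ≠ x and ‖y − ω‖ < ‖x − ω‖. -/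
open scoped RealInnerProductSpace

/-- Wolfe's criterion gives strict improvement: if `x` lies in the affine span
of a finite nonempty set `S`, `s` satisfies `⟪x - ω, x - s⟫ > 0`, and `y` is
the point of the affine span of `S ∪ {s}` minimizing the distance to `ω`, then
`y ≠ x` and `‖y - ω‖ < ‖x - ω‖`. -/
theorem stmt_9 {E : Type*} [NormedAddCommGroup E] [InnerProductSpace ℝ E]
    (ω : E) (S : Finset E) (hS : S.Nonempty)
    (x : E) (hx : x ∈ affineSpan ℝ (S : Set E))
    (s : E) (hs : 0 < ⟪x - ω, x - s⟫)
    (y : E) (hy : y ∈ affineSpan ℝ (insert s (S : Set E)))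
    (hymin : ∀ c ∈ affineSpan ℝ (insert s (S : Set E)), ‖y - ω‖ ≤ ‖c - ω‖) :
    y ≠ x ∧ ‖y - ω‖ < ‖x - ω‖ := by
  have hx' : x ∈ affineSpan ℝ (insert s (S : Set E)) :=
    affineSpan_mono ℝ (Set.subset_insert s _) hx
  have hs' : s ∈ affineSpan ℝ (insert s (S : Set E)) :=
    mem_affineSpan ℝ (Set.mem_insert s _)
  set d : ℝ := ⟪x - ω, x - s⟫ with hd
  have hsx : x - s ≠ 0 := by
    intro h
    rw [hd, h, inner_zero_right] at hs
    exact lt_irrefl 0 hs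
  set n : ℝ := ‖x - s‖ ^ 2 with hn
  have hn0 : 0 < n := pow_pos (norm_pos_iff.mpr hsx) 2
  set t : ℝ := d / n with ht
  set c : E := t • (s -ᵥ x) +ᵥ x with hc
  have hcmem : c ∈ affineSpan ℝ (insert s (S : Set E)) := by
    have := AffineSubspace.smul_vsub_vadd_mem (affineSpan ℝ (insert s (S : Set E)))
      t hs' hx' hx'
    simpa [hc] using this
  have hrw : c - ω = (x - ω) - t • (x - s) := by
    simp only [hc, vsub_eq_sub, vadd_eq_add, smul_sub]
    abel
  have hsq : ‖c - ω‖ ^ 2 = ‖x - ω‖ ^ 2 - 2 * t * d + t ^ 2 * n := by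
    rw [hrw, norm_sub_sq_real, real_inner_smul_right, norm_smul, mul_pow,
      Real.norm_eq_abs, sq_abs]
    ring
  have hlt : ‖c - ω‖ < ‖x - ω‖ := by
    have h1 : ‖c - ω‖ ^ 2 < ‖x - ω‖ ^ 2 := by
      have htn : t * n = d := div_mul_cancel₀ d hn0.ne'
      have ht0 : 0 < t := div_pos hs hn0
      have h2 : t ^ 2 * n = t * d := by rw [← htn]; ring
      have h3 : 0 < t * d := mul_pos ht0 hs
      rw [hsq]
      linarith
    exact lt_of_pow_lt_pow_left₀ 2 (norm_nonneg _) h1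
  have hmain : ‖y - ω‖ < ‖x - ω‖ := lt_of_le_of_lt (hymin c hcmem) hlt
  refine ⟨?_, hmain⟩
  intro h
  rw [h] at hmain
  exact lt_irrefl _ hmain
end

section
/- (Induction recurrence used in the convergence proof.) Let Q > 0 and let a : ℕ → ℝ be a sequence with 0 ≤ a(k) for all k ≥ 1, a(1) ≤ Q², and a(k+1) ≤ a(k) − a(k)²/(8Q²) for all k ≥ 1. Then a(k) ≤ 8Q²/(k+1) for all k ≥ 1. -/
/-!
The map `f x = x - x² / C` is increasing on `(-∞, C / 2]`, and for `t > 0` it sends `C / t` to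
`C (t - 1) / t² ≤ C / (t + 1)`. So once `a k ≤ C / (k + 1) ≤ C / 2`, the recurrence gives
`a (k + 1) ≤ f (a k) ≤ f (C / (k + 1)) ≤ C / (k + 2)`. The theorem is the case `C = 8 Q²`.
-/

lemma sub_sq_div_le_sub_sq_div {C x y : ℝ} (hC : 0 < C) (hxy : x ≤ y) (hsum : x + y ≤ C) :
    x - x ^ 2 / C ≤ y - y ^ 2 / C := by
  have key : (y - x) * (C - (x + y)) / C ≥ 0 :=
    div_nonneg (mul_nonneg (sub_nonneg.2 hxy) (sub_nonneg.2 hsum)) hC.le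
  have expand : (y - x) * (C - (x + y)) / C = (y - y ^ 2 / C) - (x - x ^ 2 / C) := by
    field_simp
    ring
  linarith

lemma div_sub_sq_div_le_div_add_one {C t : ℝ} (hC : 0 < C) (ht : 0 < t) :
    C / t - (C / t) ^ 2 / C ≤ C / (t + 1) := by
  have hf : C / t - (C / t) ^ 2 / C = C * (t - 1) / t ^ 2 := by
    field_simp
  rw [hf, div_le_div_iff₀ (by positivity) (by positivity)]
  nlinarith [sq_nonneg t, hC]

theorem le_div_add_one_of_le_sub_sq_div {C : ℝ} (hC : 0 < C) {a : ℕ → ℝ} (h1 : a 1 ≤ C / 2)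
    (hrec : ∀ k, 1 ≤ k → a (k + 1) ≤ a k - a k ^ 2 / C) :
    ∀ k, 1 ≤ k → a k ≤ C / ((k : ℝ) + 1) := by
  intro k hk
  induction k, hk using Nat.le_induction with
  | base => norm_num [h1, one_add_one_eq_two]
  | succ k hk ih =>
    have hk' : (1 : ℝ) ≤ k := by exact_mod_cast hk
    have hhalf : C / ((k : ℝ) + 1) ≤ C / 2 := div_le_div_of_nonneg_left hC.le two_pos (by linarith)
    calc a (k + 1) ≤ a k - a k ^ 2 / C := hrec k hk
      _ ≤ C / ((k : ℝ) + 1) - (C / ((k : ℝ) + 1)) ^ 2 / C :=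
        sub_sq_div_le_sub_sq_div hC ih (by linarith)
      _ ≤ C / ((k : ℝ) + 1 + 1) := div_sub_sq_div_le_div_add_one hC (by linarith)
      _ = C / (((k + 1 : ℕ) : ℝ) + 1) := by push_cast; rfl

theorem stmt_11_general (Q : ℝ) (hQ : 0 < Q) (a : ℕ → ℝ)
    (h1 : a 1 ≤ Q ^ 2)
    (hrec : ∀ k, 1 ≤ k → a (k + 1) ≤ a k - (a k) ^ 2 / (8 * Q ^ 2)) :
    ∀ k, 1 ≤ k → a k ≤ 8 * Q ^ 2 / ((k : ℝ) + 1) :=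
  le_div_add_one_of_le_sub_sq_div (by positivity) (by nlinarith [sq_nonneg Q]) hrec

/-- Induction recurrence used in the convergence proof: if `a k ≥ 0` for
`k ≥ 1`, `a 1 ≤ Q²`, and `a (k+1) ≤ a k - (a k)²/(8Q²)` for all `k ≥ 1`,
then `a k ≤ 8Q²/(k+1)` for all `k ≥ 1`. -/
theorem stmt_11 (Q : ℝ) (hQ : 0 < Q) (a : ℕ → ℝ)
    (hnn : ∀ k, 1 ≤ k → 0 ≤ a k)
    (h1 : a 1 ≤ Q ^ 2)
    (hrec : ∀ k, 1 ≤ k → a (k + 1) ≤ a k - (a k) ^ 2 / (8 * Q ^ 2)) :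
    ∀ k, 1 ≤ k → a k ≤ 8 * Q ^ 2 / ((k : ℝ) + 1) :=
  stmt_11_general Q hQ a h1 hrec
end

section
/- (Abstract form of the O(1/t) convergence theorem.) Let Q > 0 and let a : ℕ → ℝ be a nonnegative, nonincreasing sequence with a(0) ≤ Q². Suppose that for each T ≥ 1 there is a set G ⊆ {1, …, T} with |G| ≥ T/2 such that a(k) ≤ a(k−1) − a(k−1)²/(8Q²) for every k ∈ G. Then a(T) ≤ 16Q²/(T+2) for all T ≥ 1. -/
/-- Abstract form of the `O(1/t)` convergence theorem: if `a` is nonnegative,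
nonincreasing, `a 0 ≤ Q²`, and for each `T ≥ 1` at least `T/2` of the steps
`k ∈ {1,…,T}` satisfy the progress inequality
`a k ≤ a (k-1) - (a (k-1))²/(8Q²)`, then `a T ≤ 16Q²/(T+2)` for all `T ≥ 1`. -/
theorem stmt_13 (Q : ℝ) (hQ : 0 < Q) (a : ℕ → ℝ)
    (hnn : ∀ k, 0 ≤ a k)
    (hmono : ∀ k, a (k + 1) ≤ a k)
    (h0 : a 0 ≤ Q ^ 2)
    (hgood : ∀ T, 1 ≤ T → ∃ G : Finset ℕ, G ⊆ Finset.Icc 1 T ∧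
      (T : ℝ) / 2 ≤ (G.card : ℝ) ∧
      ∀ k ∈ G, a k ≤ a (k - 1) - (a (k - 1)) ^ 2 / (8 * Q ^ 2)) :
    ∀ T, 1 ≤ T → a T ≤ 16 * Q ^ 2 / ((T : ℝ) + 2) := by
  intro T hT
  have hQ2 : (0:ℝ) < Q ^ 2 := by positivity
  rcases eq_or_lt_of_le (hnn T) with h0T | hpos
  · rw [← h0T]
    positivity
  have ha : Antitone a := antitone_nat_of_succ_le hmono
  have hposk : ∀ k, k ≤ T → 0 < a k := fun k hk => lt_of_lt_of_le hpos (ha hk)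
  obtain ⟨G, hGsub, hGcard, hGprog⟩ := hgood T hT
  set g : ℕ → ℝ := fun k => 1 / a k - 1 / a (k - 1) with hg
  have hsum : ∑ k ∈ Finset.Icc 1 T, g k = 1 / a T - 1 / a 0 := by
    rw [← Finset.Ico_add_one_right_eq_Icc, Finset.sum_Ico_eq_sum_range]
    have h1 : T + 1 - 1 = T := by omega
    rw [h1]
    have h2 : ∀ i, g (1 + i) = 1 / a (i + 1) - 1 / a i := by
      intro i
      simp [hg, Nat.add_comm]
    rw [Finset.sum_congr rfl (fun i _ => h2 i),
      Finset.sum_range_sub (fun i => 1 / a i)]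
  have hg_nonneg : ∀ k ∈ Finset.Icc 1 T, 0 ≤ g k := by
    intro k hk
    rw [Finset.mem_Icc] at hk
    have hk0 : 0 < a k := hposk k hk.2
    have hle : a k ≤ a (k - 1) := ha (Nat.sub_le k 1)
    simp only [hg, sub_nonneg]
    exact one_div_le_one_div_of_le hk0 hle
  have hg_good : ∀ k ∈ G, 1 / (8 * Q ^ 2) ≤ g k := by
    intro k hk
    have hkIcc := hGsub hk
    rw [Finset.mem_Icc] at hkIcc
    have hk0 : 0 < a k := hposk k hkIcc.2
    have hk1 : 0 < a (k - 1) := hposk _ (le_trans (Nat.sub_le k 1) hkIcc.2)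
    have hp := hGprog k hk
    have hp' : a (k - 1) ^ 2 ≤ (a (k - 1) - a k) * (8 * Q ^ 2) := by
      rw [← div_le_iff₀ (by positivity)]
      linarith
    have hle : a k ≤ a (k - 1) := ha (Nat.sub_le k 1)
    simp only [hg]
    rw [div_sub_div _ _ hk0.ne' hk1.ne', div_le_div_iff₀ (by positivity)
      (by positivity)]
    nlinarith [mul_le_mul_of_nonneg_left hle hk0.le]
  have hsumG : (G.card : ℝ) * (1 / (8 * Q ^ 2)) ≤ ∑ k ∈ G, g k := by
    calc (G.card : ℝ) * (1 / (8 * Q ^ 2))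
        = ∑ _k ∈ G, 1 / (8 * Q ^ 2) := by rw [Finset.sum_const, nsmul_eq_mul]
      _ ≤ ∑ k ∈ G, g k := Finset.sum_le_sum hg_good
  have hGle : ∑ k ∈ G, g k ≤ ∑ k ∈ Finset.Icc 1 T, g k :=
    Finset.sum_le_sum_of_subset_of_nonneg hGsub (fun k hk _ => hg_nonneg k hk)
  have ha0pos : 0 < a 0 := hposk 0 (Nat.zero_le T)
  have ha0 : 1 / Q ^ 2 ≤ 1 / a 0 := one_div_le_one_div_of_le ha0pos h0
  have h8 : 1 / (8 * Q ^ 2) ≤ 1 / Q ^ 2 :=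
    one_div_le_one_div_of_le hQ2 (by nlinarith)
  have key : ((T : ℝ) + 2) / (16 * Q ^ 2) ≤ 1 / a T := by
    have hmul : ((T : ℝ) / 2) * (1 / (8 * Q ^ 2)) ≤
        (G.card : ℝ) * (1 / (8 * Q ^ 2)) := by
      apply mul_le_mul_of_nonneg_right hGcard
      positivity
    have e1 : ((T : ℝ) / 2) * (1 / (8 * Q ^ 2)) = (T : ℝ) / (16 * Q ^ 2) := by ring
    have e2 : ((T : ℝ) + 2) / (16 * Q ^ 2)
        = (T : ℝ) / (16 * Q ^ 2) + 1 / (8 * Q ^ 2) := by ring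
    rw [e1] at hmul
    rw [e2]
    linarith
  have hx : 0 < ((T : ℝ) + 2) / (16 * Q ^ 2) := by positivity
  have hfin := one_div_le_one_div_of_le hx key
  rw [one_div_one_div, one_div_div] at hfin
  exact hfin
end
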